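/- Generating function identity relating the tetrahedron index and the quantum dilogarithm: for every integer $m$, $\sum_{e \in \mathbb{Z}} I_\Delta(m,e)(q)\, x^e = \frac{(q^{-m/2+1} x^{-1}; q)_\infty}{(q^{-m/2} x; q)_\infty}$ as elements of $\mathbb{Z}((x))[[q^{1/2}]]$. -/

import Mathlib

/-! Writing `q = t²`, `y = t^{-m} x` and `z = t^{-m} x⁻¹`, the term `I_Δ(m,e) x^e` is
`∑ₙ aₙ b_{n+e}` with `aₙ = (-1)ⁿ q^{n(n+1)/2} zⁿ / (q)ₙ` and `b_k = y^k / (q)_k`, so summing over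
`e` gives the product `(∑ aₙ)(∑ b_k)`, and Euler's identities turn the two factors into
`(qz;q)_∞` and `1 / (y;q)_∞`.

Both of Euler's identities come from one principle: if `c₀ = 1` and
`c_{k+1} (1 - q^{k+1}) = c_k (α - β q^{k+1})`, then `S(w) = ∑ c_k w^k` satisfies
`S(w) (1 - α w) = S(qw) (1 - β q w)`; iterating and using `S(qᴺ w) → S(0) = 1` gives
`S(w) (αw;q)_∞ = (βqw;q)_∞`. Euler's identities are the cases `(α, β) = (1, 0)` and `(0, 1)`. -/

/-- `(q;q)_n = ∏_{i=1}^n (1 - q^i)`. -/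
noncomputable def qPochN (q : ℂ) (n : ℕ) : ℂ :=
  ∏ i ∈ Finset.range n, (1 - q ^ (i + 1))

open Filter Topology

section QPochhammer

variable {q : ℂ}

lemma one_sub_pow_succ_ne_zero (hq : ‖q‖ < 1) (k : ℕ) : 1 - q ^ (k + 1) ≠ 0 := by
  refine sub_ne_zero.mpr fun h => ?_
  have := pow_lt_one₀ (norm_nonneg q) hq k.succ_ne_zero
  rw [← norm_pow, ← h, norm_one] at this
  exact this.false

lemma qPochN_succ (q : ℂ) (n : ℕ) : qPochN q (n + 1) = qPochN q n * (1 - q ^ (n + 1)) :=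
  Finset.prod_range_succ _ _

lemma multipliable_one_sub_mul_pow (hq : ‖q‖ < 1) (u : ℂ) :
    Multipliable fun i : ℕ => 1 - u * q ^ i := by
  simp_rw [sub_eq_add_neg]
  refine multipliable_one_add_of_summable ?_
  simpa [norm_mul, norm_pow] using
    (summable_geometric_of_lt_one (norm_nonneg q) hq).mul_left ‖u‖

end QPochhammer

lemma summable_of_norm_succ_le_mul {E : Type*} [SeminormedAddCommGroup E] [CompleteSpace E]
    {f : ℕ → E} {ρ : ℕ → ℝ} {l : ℝ} (hl : l < 1) (hρ : Tendsto ρ atTop (𝓝 l))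
    (hf : ∀ k, ‖f (k + 1)‖ ≤ ρ k * ‖f k‖) : Summable f := by
  obtain ⟨r, hlr, hr⟩ := exists_between hl
  refine summable_of_ratio_norm_eventually_le hr ?_
  filter_upwards [hρ.eventually_le_const hlr] with k hk
  exact (hf k).trans (mul_le_mul_of_nonneg_right hk (norm_nonneg _))

lemma continuousAt_tsum_mul_pow_zero {a : ℕ → ℂ} {r : ℝ} (hr : 0 < r)
    (ha : Summable fun k => ‖a k‖ * r ^ k) :
    ContinuousAt (fun w => ∑' k, a k * w ^ k) 0 := by
  refine (continuousOn_tsum (fun k => by fun_prop) ha fun k w hw => ?_).continuousAt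
    (Metric.closedBall_mem_nhds 0 hr)
  rw [norm_mul, norm_pow]
  gcongr
  simpa using hw

lemma tsum_mul_pow_zero (a : ℕ → ℂ) : ∑' k, a k * (0 : ℂ) ^ k = a 0 := by
  rw [tsum_eq_single 0 fun k hk => by simp [hk]]
  simp

section QSeries

variable {q α β : ℂ} {c : ℕ → ℂ}

lemma norm_coeff_mul_pow_succ (hq : ‖q‖ < 1)
    (hc : ∀ k, c (k + 1) * (1 - q ^ (k + 1)) = c k * (α - β * q ^ (k + 1))) (w : ℂ) (k : ℕ) :
    ‖c (k + 1) * w ^ (k + 1)‖ =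
      ‖α - β * q ^ (k + 1)‖ * ‖w‖ / ‖1 - q ^ (k + 1)‖ * ‖c k * w ^ k‖ := by
  have hne := one_sub_pow_succ_ne_zero hq k
  rw [eq_div_of_mul_eq hne (hc k)]
  simp only [norm_mul, norm_div, norm_pow]
  field_simp
  ring

lemma summable_norm_coeff_mul_pow (hq : ‖q‖ < 1)
    (hc : ∀ k, c (k + 1) * (1 - q ^ (k + 1)) = c k * (α - β * q ^ (k + 1))) {w : ℂ}
    (hw : ‖α * w‖ < 1) : Summable fun k => ‖c k * w ^ k‖ := by
  have hqk : Tendsto (fun k : ℕ => q ^ (k + 1)) atTop (𝓝 0) :=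
    (tendsto_pow_atTop_nhds_zero_of_norm_lt_one hq).comp (tendsto_add_atTop_nat 1)
  have hρ : Tendsto (fun k : ℕ => ‖α - β * q ^ (k + 1)‖ * ‖w‖ / ‖1 - q ^ (k + 1)‖) atTop
      (𝓝 ‖α * w‖) := by
    have hcont : ContinuousAt (fun u : ℂ => ‖α - β * u‖ * ‖w‖ / ‖1 - u‖) 0 :=
      ContinuousAt.div (by fun_prop) (by fun_prop) (by simp)
    simpa [Function.comp_def, norm_mul] using hcont.tendsto.comp hqk
  refine summable_of_norm_succ_le_mul hw hρ fun k => ?_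
  rw [norm_norm, norm_norm, norm_coeff_mul_pow_succ hq hc]

lemma tsum_coeff_mul_pow_functional_eq (hq : ‖q‖ < 1)
    (hc : ∀ k, c (k + 1) * (1 - q ^ (k + 1)) = c k * (α - β * q ^ (k + 1))) {w : ℂ}
    (hw : ‖α * w‖ < 1) :
    (∑' k, c k * w ^ k) * (1 - α * w) = (∑' k, c k * (q * w) ^ k) * (1 - β * q * w) := by
  have hqw : ‖α * (q * w)‖ < 1 := by
    rw [mul_left_comm, norm_mul]
    exact lt_of_le_of_lt (mul_le_of_le_one_left (norm_nonneg _) hq.le) hw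
  have h₁ := (summable_norm_coeff_mul_pow hq hc hw).of_norm.hasSum
  have h₂ := (summable_norm_coeff_mul_pow hq hc hqw).of_norm.hasSum
  set S₁ := ∑' k, c k * w ^ k
  set S₂ := ∑' k, c k * (q * w) ^ k
  have hshift : HasSum (fun k => c (k + 1) * w ^ (k + 1) - c (k + 1) * (q * w) ^ (k + 1))
      (α * w * S₁ - β * q * w * S₂) := by
    refine ((h₁.mul_left (α * w)).sub (h₂.mul_left (β * q * w))).congr_fun fun k => ?_
    linear_combination w ^ (k + 1) * hc k
  have hdiff : HasSum (fun k => c k * w ^ k - c k * (q * w) ^ k)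
      (α * w * S₁ - β * q * w * S₂) := by
    rw [← hasSum_nat_add_iff' 1]
    simpa using hshift
  linear_combination (h₁.sub h₂).unique hdiff

lemma tsum_coeff_mul_pow_mul_prod_range (hq : ‖q‖ < 1)
    (hc : ∀ k, c (k + 1) * (1 - q ^ (k + 1)) = c k * (α - β * q ^ (k + 1))) {w : ℂ}
    (hw : ‖α * w‖ < 1) (N : ℕ) :
    (∑' k, c k * w ^ k) * ∏ i ∈ Finset.range N, (1 - α * w * q ^ i) =
      (∑' k, c k * (q ^ N * w) ^ k) * ∏ i ∈ Finset.range N, (1 - β * q * w * q ^ i) := by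
  induction N with
  | zero => simp
  | succ N ih =>
    have hN : ‖α * (q ^ N * w)‖ < 1 := by
      rw [mul_left_comm, norm_mul, norm_pow]
      exact lt_of_le_of_lt
        (mul_le_of_le_one_left (norm_nonneg _) (pow_le_one₀ (norm_nonneg _) hq.le)) hw
    have hfe := tsum_coeff_mul_pow_functional_eq hq hc hN
    rw [← mul_assoc q, ← pow_succ'] at hfe
    rw [Finset.prod_range_succ, Finset.prod_range_succ]
    linear_combination (1 - α * w * q ^ N) * ih +
      (∏ i ∈ Finset.range N, (1 - β * q * w * q ^ i)) * hfe

lemma tendsto_tsum_coeff_mul_pow_pow_mul (hq : ‖q‖ < 1)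
    (hc : ∀ k, c (k + 1) * (1 - q ^ (k + 1)) = c k * (α - β * q ^ (k + 1))) (hc₀ : c 0 = 1)
    (w : ℂ) : Tendsto (fun N : ℕ => ∑' k, c k * (q ^ N * w) ^ k) atTop (𝓝 1) := by
  set r : ℝ := (‖α‖ + 1)⁻¹
  have hr : 0 < r := by positivity
  have hαr : ‖α * (r : ℂ)‖ < 1 := by
    rw [norm_mul, Complex.norm_real, Real.norm_of_nonneg hr.le, ← div_eq_mul_inv,
      div_lt_one (by positivity)]
    exact lt_add_one _
  have hsum : Summable fun k => ‖c k‖ * r ^ k := by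
    simpa [norm_mul, norm_pow, Complex.norm_real, abs_of_pos hr]
      using summable_norm_coeff_mul_pow hq hc hαr
  have hlim : Tendsto (fun N : ℕ => q ^ N * w) atTop (𝓝 0) := by
    simpa using (tendsto_pow_atTop_nhds_zero_of_norm_lt_one hq).mul_const w
  simpa [Function.comp_def, tsum_mul_pow_zero, hc₀] using
    (continuousAt_tsum_mul_pow_zero hr hsum).tendsto.comp hlim

theorem tsum_coeff_mul_pow_mul_tprod (hq : ‖q‖ < 1)
    (hc : ∀ k, c (k + 1) * (1 - q ^ (k + 1)) = c k * (α - β * q ^ (k + 1))) (hc₀ : c 0 = 1)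
    {w : ℂ} (hw : ‖α * w‖ < 1) :
    (∑' k, c k * w ^ k) * ∏' i : ℕ, (1 - α * w * q ^ i) =
      ∏' i : ℕ, (1 - β * q * w * q ^ i) := by
  have hlhs := ((multipliable_one_sub_mul_pow hq (α * w)).hasProd.tendsto_prod_nat).const_mul
    (∑' k, c k * w ^ k)
  have hrhs := (tendsto_tsum_coeff_mul_pow_pow_mul hq hc hc₀ w).mul
    (multipliable_one_sub_mul_pow hq (β * q * w)).hasProd.tendsto_prod_nat
  rw [one_mul] at hrhs
  simp_rw [tsum_coeff_mul_pow_mul_prod_range hq hc hw] at hlhs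
  exact tendsto_nhds_unique hlhs hrhs

end QSeries

section Euler

noncomputable def eulerCoeff (q : ℂ) (n : ℕ) : ℂ :=
  (-1) ^ n * q ^ (n * (n + 1) / 2) * (qPochN q n)⁻¹

variable {q : ℂ}

lemma inv_qPochN_succ_mul (hq : ‖q‖ < 1) (k : ℕ) :
    (qPochN q (k + 1))⁻¹ * (1 - q ^ (k + 1)) = (qPochN q k)⁻¹ * (1 - 0 * q ^ (k + 1)) := by
  rw [qPochN_succ, mul_inv, zero_mul, sub_zero, mul_one,
    inv_mul_cancel_right₀ (one_sub_pow_succ_ne_zero hq k)]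

lemma eulerCoeff_succ_mul (hq : ‖q‖ < 1) (k : ℕ) :
    eulerCoeff q (k + 1) * (1 - q ^ (k + 1)) = eulerCoeff q k * (0 - 1 * q ^ (k + 1)) := by
  have htri : (k + 1) * (k + 1 + 1) / 2 = k * (k + 1) / 2 + (k + 1) := by
    rw [show (k + 1) * (k + 1 + 1) = k * (k + 1) + (k + 1) * 2 by ring,
      Nat.add_mul_div_right _ _ two_pos]
  have hne := one_sub_pow_succ_ne_zero hq k
  rw [eulerCoeff, eulerCoeff, htri, qPochN_succ, pow_add, pow_succ (-1 : ℂ)]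
  field_simp
  ring

theorem tsum_inv_qPochN_mul_pow_mul_tprod (hq : ‖q‖ < 1) {y : ℂ} (hy : ‖y‖ < 1) :
    (∑' k, (qPochN q k)⁻¹ * y ^ k) * ∏' i : ℕ, (1 - y * q ^ i) = 1 := by
  simpa using tsum_coeff_mul_pow_mul_tprod (c := fun k => (qPochN q k)⁻¹) hq
    (inv_qPochN_succ_mul hq) (by simp [qPochN]) (by simpa using hy)

theorem tsum_eulerCoeff_mul_pow (hq : ‖q‖ < 1) (z : ℂ) :
    ∑' n, eulerCoeff q n * z ^ n = ∏' i : ℕ, (1 - q * z * q ^ i) := by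
  simpa using tsum_coeff_mul_pow_mul_tprod hq (eulerCoeff_succ_mul hq)
    (by simp [eulerCoeff, qPochN]) (w := z) (by simp)

end Euler

theorem tsum_int_tsum_shift_mul {R : Type*} [NormedRing R] [CompleteSpace R] {a b : ℕ → R}
    (ha : Summable fun n => ‖a n‖) (hb : Summable fun k => ‖b k‖) :
    ∑' e : ℤ, ∑' n : ℕ, (if 0 ≤ (n : ℤ) + e then a n * b ((n : ℤ) + e).toNat else 0) =
      (∑' n, a n) * ∑' k, b k := by
  set g : ℤ × ℕ → R := fun p => if 0 ≤ (p.2 : ℤ) + p.1 then a p.2 * b ((p.2 : ℤ) + p.1).toNat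
    else 0
  set φ : ℕ × ℕ → ℤ × ℕ := fun p => ((p.2 : ℤ) - p.1, p.1)
  have hφ : φ.Injective := fun p p' h => by
    simp only [φ, Prod.mk.injEq] at h
    ext <;> omega
  have hgφ : ∀ p, g (φ p) = a p.1 * b p.2 := fun p => by
    simp only [g, φ, add_sub_cancel, Nat.cast_nonneg, if_true, Int.toNat_natCast]
  have hsupp : ∀ p ∉ Set.range φ, g p = 0 := fun ⟨e, n⟩ hp => by
    refine if_neg fun he => hp ⟨(n, ((n : ℤ) + e).toNat), ?_⟩
    simp only [φ, Prod.mk.injEq, and_true]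
    omega
  have hg : Summable g := (hφ.summable_iff hsupp).mp
    ((summable_mul_of_summable_norm ha hb).congr fun p => (hgφ p).symm)
  calc ∑' e : ℤ, ∑' n : ℕ, g (e, n) = ∑' p, g p := hg.tsum_prod.symm
    _ = ∑' p, g (φ p) := (hφ.tsum_eq fun p hp => by_contra fun h => hp (hsupp p h)).symm
    _ = (∑' n, a n) * ∑' k, b k := by
      rw [tsum_congr hgφ, tsum_mul_tsum_of_summable_norm ha hb]

/-- The tetrahedron index
`I_Δ(m,e) = ∑_{n ≥ max(0,-e)} (-1)^n q^{n(n+1)/2 - (n+e/2)m} / ((q)_n (q)_{n+e})`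
evaluated at `q = t²` (so the exponent of `t` is `n(n+1) - (2n+e)m`). -/
noncomputable def IDelta (t : ℂ) (m e : ℤ) : ℂ :=
  ∑' n : ℕ,
    if 0 ≤ (n : ℤ) + e then
      (-1) ^ n * t ^ ((n : ℤ) * (n + 1) - (2 * n + e) * m) /
        (qPochN (t ^ 2) n * qPochN (t ^ 2) ((n : ℤ) + e).toNat)
    else 0

lemma zpow_mul_zpow_eq_of_add_eq {t x : ℂ} (ht : t ≠ 0) (hx : x ≠ 0) (m e : ℤ) {n k : ℕ}
    (hk : (k : ℤ) = n + e) :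
    t ^ ((n : ℤ) * (n + 1) - (2 * n + e) * m) * x ^ e =
      (t ^ 2) ^ (n * (n + 1) / 2) * (t ^ (-m) * x⁻¹) ^ n * (t ^ (-m) * x) ^ k := by
  obtain rfl : e = k - n := by omega
  have hexp : (n : ℤ) * (n + 1) - (2 * n + (k - n)) * m =
      ((n * (n + 1) : ℕ) : ℤ) + -m * n + -m * k := by
    push_cast
    ring
  rw [← pow_mul, Nat.mul_div_cancel' (even_iff_two_dvd.mp (Nat.even_mul_succ_self n)), hexp,
    zpow_add₀ ht, zpow_add₀ ht, zpow_mul, zpow_mul, zpow_sub₀ hx]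
  simp only [zpow_natCast, mul_pow, inv_pow]
  field_simp

lemma IDelta_mul_zpow {t x : ℂ} (ht : t ≠ 0) (hx : x ≠ 0) (m e : ℤ) :
    IDelta t m e * x ^ e = ∑' n : ℕ, if 0 ≤ (n : ℤ) + e then
      (eulerCoeff (t ^ 2) n * (t ^ (-m) * x⁻¹) ^ n) *
        ((qPochN (t ^ 2) ((n : ℤ) + e).toNat)⁻¹ * (t ^ (-m) * x) ^ ((n : ℤ) + e).toNat)
      else 0 := by
  rw [IDelta, ← tsum_mul_right]
  refine tsum_congr fun n => ?_
  split_ifs with h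
  · have hexp := zpow_mul_zpow_eq_of_add_eq ht hx m e (Int.toNat_of_nonneg h)
    rw [div_eq_mul_inv, mul_inv, eulerCoeff]
    linear_combination (-1) ^ n * (qPochN (t ^ 2) n)⁻¹ *
      (qPochN (t ^ 2) ((n : ℤ) + e).toNat)⁻¹ * hexp
  · exact zero_mul _

/-- Generating function identity relating the tetrahedron index and the
quantum dilogarithm: `∑_{e ∈ ℤ} I_Δ(m,e) x^e = (q^{-m/2+1}x⁻¹;q)_∞ / (q^{-m/2}x;q)_∞`
with `q = t²`, `q^{-m/2} = t^{-m}`. -/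
theorem IDelta_generating_function (t x : ℂ) (m : ℤ)
    (ht : ‖t‖ < 1) (ht0 : t ≠ 0) (hx : x ≠ 0) (hconv : ‖t ^ (-m) * x‖ < 1) :
    ∑' e : ℤ, IDelta t m e * x ^ e =
      (∏' i : ℕ, (1 - t ^ (2 - m) * x⁻¹ * (t ^ 2) ^ i)) /
        ∏' i : ℕ, (1 - t ^ (-m) * x * (t ^ 2) ^ i) := by
  have hq : ‖t ^ 2‖ < 1 := by
    rw [norm_pow]
    exact pow_lt_one₀ (norm_nonneg t) ht two_ne_zero
  have hEuler := tsum_inv_qPochN_mul_pow_mul_tprod hq hconv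
  have ha := summable_norm_coeff_mul_pow hq (eulerCoeff_succ_mul hq) (w := t ^ (-m) * x⁻¹)
    (by simp)
  have hy : ‖1 * (t ^ (-m) * x)‖ < 1 := by rw [one_mul]; exact hconv
  have hb := summable_norm_coeff_mul_pow (c := fun k => (qPochN (t ^ 2) k)⁻¹) hq
    (inv_qPochN_succ_mul (q := t ^ 2) hq) hy
  rw [tsum_congr (IDelta_mul_zpow ht0 hx m), tsum_int_tsum_shift_mul ha hb,
    tsum_eulerCoeff_mul_pow hq, eq_div_iff (right_ne_zero_of_mul_eq_one hEuler), mul_assoc,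
    hEuler, mul_one]
  refine tprod_congr fun i => ?_
  rw [sub_eq_add_neg (2 : ℤ), zpow_add₀ ht0, zpow_ofNat]
  ring
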